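/- Let E be a real inner product space, let c > 0, and let s_s, s_w : E → E be the score functions of the strong and weak models at time t. Starting from x ∈ E, let x̃ = x + c • (s_s(x) − s_w(x)) be the W2SD-reflected latent variable, and assume the strong score is locally constant across the reflection, i.e., s_s(x̃) = s_s(x). Then the subsequent strong-model denoising step satisfies M^s(x̃) = x̃ + c • s_s(x̃) = x + c • (2·s_s(x) − s_w(x)) = x + c • (s_s(x) + Δ₁(x)); that is, one W2SD reflection-plus-denoising step coincides with the auto-guidance update x + c•(s_s(x) + w•(s_s(x) − s_w(x))) at guidance weight w = 1. -/
import Mathlib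


/-- One W2SD reflection-plus-denoising step coincides with the auto-guidance
update at guidance weight `w = 1`: if `xTilde = x + c • (s_s x - s_w x)` and the
strong score is locally constant across the reflection (`s_s xTilde = s_s x`),
then `M^s xTilde = xTilde + c • s_s xTilde = x + c • ((2 : ℝ) • s_s x - s_w x)
= x + c • (s_s x + (1 : ℝ) • (s_s x - s_w x))`. -/
theorem w2sd_step_eq_auto_guidance_w_one {E : Type*} [NormedAddCommGroup E]
    [InnerProductSpace ℝ E]
    (c : ℝ) (hc : 0 < c) (s_s s_w : E → E) (x xTilde : E)
    (hrefl : xTilde = x + c • (s_s x - s_w x))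
    (hconst : s_s xTilde = s_s x) :
    xTilde + c • s_s xTilde = x + c • ((2 : ℝ) • s_s x - s_w x) ∧
      xTilde + c • s_s xTilde = x + c • (s_s x + (1 : ℝ) • (s_s x - s_w x)) := by
  subst hrefl
  constructor <;> rw [hconst] <;> [skip; rw [one_smul]] <;>
    simp [two_smul, smul_add, smul_sub] <;> abel
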